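/- arXiv:2302.09063 — 2 statements merged into one kernel-verified Lean document; each statement's English description precedes it below -/
import Mathlib

section
/- In the Jaynes-Cummings heat-parametrix expansion, every odd-index term b_{−2j−1}(t,X) is a linear combination (with smooth scalar coefficients) of a₁ and a₀a₁, and therefore Tr(b_{−2j−1}(t,X)) = 0 for all j ≥ 0, t ≥ 0, X ≠ 0. -/
attribute [local instance] Matrix.linftyOpNormedAddCommGroup Matrix.linftyOpNormedSpace
  Matrix.linftyOpNormedRing Matrix.linftyOpNormedAlgebra

/-- An interval integral of a function valued in a submodule of a
finite-dimensional complex normed space lies in that submodule. -/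
lemma intervalIntegral_mem_submodule
    {E : Type*} [NormedAddCommGroup E] [NormedSpace ℂ E] [FiniteDimensional ℂ E]
    (W : Submodule ℂ E) (f : ℝ → E) (s u : ℝ) (hf : ∀ x, f x ∈ W) :
    (∫ x in s..u, f x) ∈ W := by
  by_cases hi : IntervalIntegrable f MeasureTheory.volume s u
  · obtain ⟨W', hW'⟩ := W.exists_isCompl
    let P : Matrix (Fin 2) (Fin 2) ℂ →ₗ[ℂ] W := 0
    let Q : E →ₗ[ℂ] W := W.linearProjOfIsCompl W' hW'
    let Qc : E →L[ℂ] W := ⟨Q, Q.continuous_of_finiteDimensional⟩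
    have hfg : ∀ x, f x = W.subtypeL (Qc (f x)) := by
      intro x
      exact (congrArg Subtype.val
        (Submodule.linearProjOfIsCompl_apply_left hW' ⟨f x, hf x⟩)).symm
    have hg : IntervalIntegrable (fun x => Qc (f x)) MeasureTheory.volume s u :=
      ⟨Qc.integrable_comp hi.1, Qc.integrable_comp hi.2⟩
    have heq : (∫ x in s..u, f x) = W.subtypeL (∫ x in s..u, Qc (f x)) := by
      rw [← ContinuousLinearMap.intervalIntegral_comp_comm _ hg]
      exact intervalIntegral.integral_congr fun x _ => hfg x
    rw [heq]
    exact Submodule.coe_mem _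
  · rw [intervalIntegral.integral_undef hi]
    exact W.zero_mem

/-- In the Jaynes–Cummings heat-parametrix expansion, every odd-index term
`b_{−2j−1}(t,X)` is a linear combination of `a₁` and `a₀a₁`, hence has trace
zero, for all `j ≥ 0`, `t ≥ 0`, `X ≠ 0`.  Here `b j` stands for `b_{−j}` and the
terms satisfy the recursion `b₀ = e^{−t p₂} I₂`, `b₁ = −t e^{−t p₂} a₁`,
`b_j(t) = −∫₀ᵗ e^{−(t−t')p₂}(a₀ b_{j−2}(t') + a₁ b_{j−1}(t')) dt'` for `j ≥ 2`. -/
theorem jc_odd_terms_trace_zero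
    (a₀ : Matrix (Fin 2) (Fin 2) ℂ)
    (a₁ : ℝ × ℝ → Matrix (Fin 2) (Fin 2) ℂ)
    (p₂ : ℝ × ℝ → ℝ)
    (hac : ∀ X, a₁ X * a₀ = -(a₀ * a₁ X))
    (h0 : a₀ * a₀ = 1)
    (h1 : ∀ X, a₁ X * a₁ X = (p₂ X) • (1 : Matrix (Fin 2) (Fin 2) ℂ))
    (b : ℕ → ℝ → ℝ × ℝ → Matrix (Fin 2) (Fin 2) ℂ)
    (hb0 : ∀ t X, b 0 t X = Real.exp (-(t * p₂ X)) • (1 : Matrix (Fin 2) (Fin 2) ℂ))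
    (hb1 : ∀ t X, b 1 t X = (-(t * Real.exp (-(t * p₂ X)))) • a₁ X)
    (hbr : ∀ j, 2 ≤ j → ∀ t X, b j t X =
      -∫ t' in (0 : ℝ)..t,
        Real.exp (-((t - t') * p₂ X)) • (a₀ * b (j - 2) t' X + a₁ X * b (j - 1) t' X)) :
    ∀ (j : ℕ) (t : ℝ), 0 ≤ t → ∀ X : ℝ × ℝ, X ≠ 0 →
      (∃ c d : ℂ, b (2 * j + 1) t X = c • a₁ X + d • (a₀ * a₁ X)) ∧
        (b (2 * j + 1) t X).trace = 0 := by
  have hca : ∀ X, a₀ * a₁ X = -(a₁ X * a₀) := fun X => by rw [hac X, neg_neg]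
  have hrsmul : ∀ (r : ℝ) (M : Matrix (Fin 2) (Fin 2) ℂ), r • M = (r : ℂ) • M := by
    intro r M
    rw [show ((r : ℝ) : ℂ) = algebraMap ℝ ℂ r from rfl, algebraMap_smul]
  set W₀ : ℝ × ℝ → Submodule ℂ (Matrix (Fin 2) (Fin 2) ℂ) :=
    fun _ => Submodule.span ℂ {(1 : Matrix (Fin 2) (Fin 2) ℂ), a₀} with hW₀
  set W₁ : ℝ × ℝ → Submodule ℂ (Matrix (Fin 2) (Fin 2) ℂ) :=
    fun X => Submodule.span ℂ {a₁ X, a₀ * a₁ X} with hW₁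
  have mem0 : ∀ X (M : Matrix (Fin 2) (Fin 2) ℂ),
      M ∈ W₀ X ↔ ∃ c d : ℂ, c • 1 + d • a₀ = M := fun X M => Submodule.mem_span_pair
  have mem1 : ∀ X (M : Matrix (Fin 2) (Fin 2) ℂ),
      M ∈ W₁ X ↔ ∃ c d : ℂ, c • a₁ X + d • (a₀ * a₁ X) = M := fun X M => Submodule.mem_span_pair
  -- multiplication rules between the submodules
  have mul00 : ∀ X M, M ∈ W₀ X → a₀ * M ∈ W₀ X := by
    intro X M hM
    obtain ⟨c, d, rfl⟩ := (mem0 X M).1 hM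
    rw [mem0 X]
    refine ⟨d, c, ?_⟩
    rw [mul_add, mul_smul_comm, mul_smul_comm, mul_one, h0]
    abel
  have mul01 : ∀ X M, M ∈ W₀ X → a₁ X * M ∈ W₁ X := by
    intro X M hM
    obtain ⟨c, d, rfl⟩ := (mem0 X M).1 hM
    rw [mem1 X]
    refine ⟨c, -d, ?_⟩
    rw [mul_add, mul_smul_comm, mul_smul_comm, mul_one, hac X]
    module
  have mul10 : ∀ X M, M ∈ W₁ X → a₀ * M ∈ W₁ X := by
    intro X M hM
    obtain ⟨c, d, rfl⟩ := (mem1 X M).1 hM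
    rw [mem1 X]
    refine ⟨d, c, ?_⟩
    rw [mul_add, mul_smul_comm, mul_smul_comm, ← mul_assoc, h0, one_mul]
    abel
  have mul11 : ∀ X M, M ∈ W₁ X → a₁ X * M ∈ W₀ X := by
    intro X M hM
    obtain ⟨c, d, rfl⟩ := (mem1 X M).1 hM
    rw [mem0 X]
    refine ⟨c * (p₂ X : ℂ), -(d * (p₂ X : ℂ)), ?_⟩
    have key : a₁ X * (a₀ * a₁ X) = -((p₂ X : ℂ) • a₀) := by
      rw [← mul_assoc, hac X, neg_mul, mul_assoc, h1 X, hrsmul, mul_smul_comm, mul_one]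
    have key1 : a₁ X * a₁ X = ((p₂ X : ℂ)) • 1 := by rw [h1 X, hrsmul]
    rw [mul_add, mul_smul_comm, mul_smul_comm, key, key1]
    module
  -- the main induction: parity-dependent membership
  have main : ∀ n t X, (Even n → b n t X ∈ W₀ X) ∧ (Odd n → b n t X ∈ W₁ X) := by
    intro n
    induction n using Nat.strong_induction_on with
    | _ n ih =>
      match n, ih with
      | 0, _ =>
        intro t X
        refine ⟨fun _ => ?_, fun h => absurd h (by decide)⟩
        rw [hb0, mem0 X]
        exact ⟨(Real.exp (-(t * p₂ X)) : ℂ), 0, by rw [zero_smul, add_zero, hrsmul]⟩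
      | 1, _ =>
        intro t X
        refine ⟨fun h => absurd h (by decide), fun _ => ?_⟩
        rw [hb1, mem1 X]
        exact ⟨((-(t * Real.exp (-(t * p₂ X))) : ℝ) : ℂ), 0,
          by rw [zero_smul, add_zero, hrsmul]⟩
      | (m + 2), ih =>
        intro t X
        have h2 : 2 ≤ m + 2 := by omega
        have hint : ∀ t', Real.exp (-((t - t') * p₂ X)) •
            (a₀ * b (m + 2 - 2) t' X + a₁ X * b (m + 2 - 1) t' X) ∈
            (if Even (m + 2) then W₀ X else W₁ X) := by
          intro t'
          by_cases hev : Even (m + 2)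
          · simp only [hev, if_true]
            have hm : Even m := Nat.even_iff.mpr (by have := Nat.even_iff.mp hev; omega)
            have hm1 : Odd (m + 1) := Even.add_one hm
            have e1 : a₀ * b (m + 2 - 2) t' X ∈ W₀ X :=
              mul00 X _ ((ih m (by omega) t' X).1 hm)
            have e2 : a₁ X * b (m + 2 - 1) t' X ∈ W₀ X :=
              mul11 X _ ((ih (m + 1) (by omega) t' X).2 hm1)
            rw [hrsmul]
            exact Submodule.smul_mem _ _ ((W₀ X).add_mem e1 e2)
          · simp only [hev, if_false]
            have hm : Odd m := Nat.odd_iff.mpr (by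
              have := Nat.even_iff.not.mp hev
              omega)
            have hm1 : Even (m + 1) := hm.add_one
            have e1 : a₀ * b (m + 2 - 2) t' X ∈ W₁ X :=
              mul10 X _ ((ih m (by omega) t' X).2 hm)
            have e2 : a₁ X * b (m + 2 - 1) t' X ∈ W₁ X :=
              mul01 X _ ((ih (m + 1) (by omega) t' X).1 hm1)
            rw [hrsmul]
            exact Submodule.smul_mem _ _ ((W₁ X).add_mem e1 e2)
        have hWint := intervalIntegral_mem_submodule (if Even (m + 2) then W₀ X else W₁ X)
          (fun t' => Real.exp (-((t - t') * p₂ X)) •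
            (a₀ * b (m + 2 - 2) t' X + a₁ X * b (m + 2 - 1) t' X)) 0 t hint
        constructor
        · intro hev
          rw [hbr (m + 2) h2 t X]
          refine Submodule.neg_mem _ ?_
          simpa [hev] using hWint
        · intro hodd
          rw [hbr (m + 2) h2 t X]
          refine Submodule.neg_mem _ ?_
          have hev : ¬ Even (m + 2) := Nat.not_even_iff_odd.mpr hodd
          simpa [hev] using hWint
  -- trace identities
  have tr1 : ∀ X, (a₁ X).trace = 0 := by
    intro X
    have e1 : (a₀ * (a₁ X * a₀)).trace = (a₁ X).trace := by
      rw [Matrix.trace_mul_comm, mul_assoc, h0, mul_one]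
    have e2 : a₀ * (a₁ X * a₀) = -(a₁ X) := by
      rw [hac X, mul_neg, ← mul_assoc, h0, one_mul]
    have e3 : (a₁ X).trace = -(a₁ X).trace := by
      conv_lhs => rw [← e1, e2]
      rw [Matrix.trace_neg]
    linear_combination e3 / 2
  have tr2 : ∀ X, (a₀ * a₁ X).trace = 0 := by
    intro X
    have e3 : (a₀ * a₁ X).trace = -(a₀ * a₁ X).trace := by
      conv_lhs => rw [Matrix.trace_mul_comm, hac X, Matrix.trace_neg]
    linear_combination e3 / 2
  -- conclude
  intro j t _ X _
  have hodd : Odd (2 * j + 1) := ⟨j, by ring⟩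
  have hmem := (main (2 * j + 1) t X).2 hodd
  obtain ⟨c, d, hcd⟩ := (mem1 X _).1 hmem
  refine ⟨⟨c, d, hcd.symm⟩, ?_⟩
  rw [← hcd, Matrix.trace_add, Matrix.trace_smul, Matrix.trace_smul, tr1, tr2]
  simp
end

section
/- In the 3-level Ξ-configuration JC heat-parametrix expansion, every odd-index term b_{−2j−1}(t,X) has all diagonal entries equal to zero, hence Tr(b_{−2j−1}(t,X)) = 0 for all j ≥ 0, t ≥ 0, X ≠ 0. -/
/-!
Grade square matrices by the checkerboard parity of positions: `M` has parity `p` if it vanishes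
off the entries `(i, k)` with `i + k ≡ p (mod 2)`. Entrywise operations, scalar weights and
integrals preserve the parity, and matrix multiplication adds parities. The diagonal `a₀` has
parity `0` and the tridiagonal `a₁` with zero diagonal has parity `1`, so the recursion makes
`b_{−j}` have parity `j mod 2`; a matrix of parity `1` has zero diagonal.
-/

attribute [local instance] Matrix.linftyOpNormedAddCommGroup Matrix.linftyOpNormedSpace
  Matrix.linftyOpNormedRing Matrix.linftyOpNormedAlgebra

open MeasureTheory

theorem ContinuousLinearMap.intervalIntegral_eq_zero_of_forall {E F : Type*}
    [NormedAddCommGroup E] [NormedSpace ℝ E] [NormedAddCommGroup F] [NormedSpace ℝ F]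
    [CompleteSpace F] (L : E →L[ℝ] F) {f : ℝ → E} (hf : ∀ t, L (f t) = 0) (u v : ℝ) :
    L (∫ t in u..v, f t) = 0 := by
  by_cases hE : CompleteSpace E
  · by_cases hfi : IntervalIntegrable f volume u v
    · simp [← L.intervalIntegral_comp_comm hfi, hf]
    · rw [intervalIntegral.integral_undef hfi, map_zero]
  · simp [intervalIntegral, integral_of_not_completeSpace hE]

namespace Matrix

variable {ι R : Type*} (σ : ι → ZMod 2)

def HasParity [Zero R] (p : ZMod 2) (M : Matrix ι ι R) : Prop :=
  ∀ i k, σ i + σ k ≠ p → M i k = 0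

variable {σ}

theorem HasParity.apply_self_eq_zero [Zero R] {M : Matrix ι ι R} (hM : M.HasParity σ 1)
    (i : ι) : M i i = 0 :=
  hM i i (by rw [CharTwo.add_self_eq_zero]; exact zero_ne_one)

theorem HasParity.trace_eq_zero [Fintype ι] [AddCommMonoid R] {M : Matrix ι ι R}
    (hM : M.HasParity σ 1) : M.trace = 0 :=
  Finset.sum_eq_zero fun i _ => hM.apply_self_eq_zero i

theorem IsDiag.hasParity_zero [Zero R] {M : Matrix ι ι R} (hM : M.IsDiag) :
    M.HasParity σ 0 := by
  intro i k h
  refine hM fun hik => h ?_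
  rw [hik, CharTwo.add_self_eq_zero]

theorem hasParity_one_of_natAbs_sub_ne_one [Zero R] {n : ℕ} {M : Matrix (Fin n) (Fin n) R}
    (hM : ∀ j k : Fin n, ((j : ℤ) - (k : ℤ)).natAbs ≠ 1 → M j k = 0) :
    M.HasParity (fun i : Fin n => ((i : ℕ) : ZMod 2)) 1 := by
  intro j k h
  refine hM j k fun hjk => h ?_
  rcases (by omega : (j : ℕ) = k + 1 ∨ (k : ℕ) = j + 1) with e | e
  all_goals simp only [e]; push_cast; grind

theorem HasParity.add [AddZeroClass R] {M N : Matrix ι ι R} {p : ZMod 2}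
    (hM : M.HasParity σ p) (hN : N.HasParity σ p) : (M + N).HasParity σ p := fun i k h => by
  rw [add_apply, hM i k h, hN i k h, add_zero]

theorem HasParity.neg [NegZeroClass R] {M : Matrix ι ι R} {p : ZMod 2}
    (hM : M.HasParity σ p) : (-M).HasParity σ p := fun i k h => by
  rw [neg_apply, hM i k h, neg_zero]

theorem HasParity.smul {S : Type*} [Zero R] [SMulZeroClass S R] {M : Matrix ι ι R}
    {p : ZMod 2} (c : S) (hM : M.HasParity σ p) : (c • M).HasParity σ p := fun i k h => by
  rw [smul_apply, hM i k h, smul_zero]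

theorem HasParity.mul [Fintype ι] [NonUnitalNonAssocSemiring R] {M N : Matrix ι ι R}
    {p q : ZMod 2} (hM : M.HasParity σ p) (hN : N.HasParity σ q) :
    (M * N).HasParity σ (p + q) := by
  intro i k h
  refine (mul_apply ..).trans <| Finset.sum_eq_zero fun m _ => ?_
  by_cases hpm : σ i + σ m = p
  · have hmk : σ m + σ k ≠ q := by
      rintro rfl
      exact h (by linear_combination hpm - CharTwo.add_self_eq_zero (σ m))
    rw [hN m k hmk, mul_zero]
  · rw [hM i m hpm, zero_mul]

theorem HasParity.intervalIntegral [Fintype ι] {E : Type*} [NormedAddCommGroup E]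
    [NormedSpace ℝ E] [CompleteSpace E] {f : ℝ → Matrix ι ι E} {p : ZMod 2}
    (hf : ∀ t, (f t).HasParity σ p) (u v : ℝ) : (∫ t in u..v, f t).HasParity σ p :=
  fun i k h =>
    let entry : Matrix ι ι E →L[ℝ] E :=
      ⟨entryLinearMap ℝ E i k, (continuous_apply k).comp (continuous_apply i)⟩
    entry.intervalIntegral_eq_zero_of_forall (fun t => hf t i k h) u v

theorem hasParity_of_heat_recursion [Fintype ι] {A : Type*} [NormedRing A] [NormedSpace ℝ A]
    [CompleteSpace A] {a₀ a₁ : Matrix ι ι A} (ha₀ : a₀.HasParity σ 0) (ha₁ : a₁.HasParity σ 1)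
    (c : ℝ → ℝ → ℝ) {b : ℕ → ℝ → Matrix ι ι A}
    (hb₀ : ∀ t, (b 0 t).HasParity σ 0) (hb₁ : ∀ t, (b 1 t).HasParity σ 1)
    (hb : ∀ j t, b (j + 2) t = -∫ t' in (0 : ℝ)..t, c t t' • (a₀ * b j t' + a₁ * b (j + 1) t'))
    (j : ℕ) (t : ℝ) : (b j t).HasParity σ j := by
  induction j using Nat.twoStepInduction generalizing t with
  | zero => simpa using hb₀ t
  | one => simpa using hb₁ t
  | more j ih₀ ih₁ =>
    have e₀ : ((j + 2 : ℕ) : ZMod 2) = 0 + j := by grind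
    have e₁ : ((j + 2 : ℕ) : ZMod 2) = 1 + (j + 1 : ℕ) := by grind
    rw [hb]
    refine .neg <| .intervalIntegral (fun t' => .smul _ (.add ?_ ?_)) _ _
    · rw [e₀]; exact ha₀.mul (ih₀ t')
    · rw [e₁]; exact ha₁.mul (ih₁ t')

end Matrix

/-- In the 3-level Ξ-configuration JC heat-parametrix expansion, every odd-index
term `b_{−2j−1}(t,X)` has all diagonal entries equal to zero, hence
`Tr b_{−2j−1}(t,X) = 0` for all `j ≥ 0`, `t ≥ 0`, `X ≠ 0`.  Here `b j` stands
for `b_{−j}`, `a₀` is diagonal and `a₁` is tridiagonal with zero diagonal, and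
the recursion is `b₀ = e^{−t p₂} I₃`, `b₁ = −t e^{−t p₂} a₁`,
`b_j(t) = −∫₀ᵗ e^{−(t−t')p₂}(a₀ b_{j−2}(t') + a₁ b_{j−1}(t')) dt'` for `j ≥ 2`. -/
theorem xi_jc_odd_terms_trace_zero
    (a₀ : Matrix (Fin 3) (Fin 3) ℂ)
    (a₁ : ℝ × ℝ → Matrix (Fin 3) (Fin 3) ℂ)
    (p₂ : ℝ × ℝ → ℝ)
    (ha0 : ∀ j k : Fin 3, j ≠ k → a₀ j k = 0)
    (ha1 : ∀ X, ∀ j k : Fin 3, ((j : ℤ) - (k : ℤ)).natAbs ≠ 1 → a₁ X j k = 0)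
    (b : ℕ → ℝ → ℝ × ℝ → Matrix (Fin 3) (Fin 3) ℂ)
    (hb0 : ∀ t X, b 0 t X = Real.exp (-(t * p₂ X)) • (1 : Matrix (Fin 3) (Fin 3) ℂ))
    (hb1 : ∀ t X, b 1 t X = (-(t * Real.exp (-(t * p₂ X)))) • a₁ X)
    (hbr : ∀ j, 2 ≤ j → ∀ t X, b j t X =
      -∫ t' in (0 : ℝ)..t,
        Real.exp (-((t - t') * p₂ X)) • (a₀ * b (j - 2) t' X + a₁ X * b (j - 1) t' X)) :
    ∀ (j : ℕ) (t : ℝ), 0 ≤ t → ∀ X : ℝ × ℝ, X ≠ 0 →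
      (∀ i : Fin 3, b (2 * j + 1) t X i i = 0) ∧ (b (2 * j + 1) t X).trace = 0 := by
  intro j t _ X _
  have ha₁ := Matrix.hasParity_one_of_natAbs_sub_ne_one (ha1 X)
  have hparity := Matrix.hasParity_of_heat_recursion (Matrix.IsDiag.hasParity_zero ha0) ha₁
    (fun t t' => Real.exp (-((t - t') * p₂ X))) (b := fun j t => b j t X)
    (fun t => by rw [hb0]; exact Matrix.isDiag_one.hasParity_zero.smul _)
    (fun t => by rw [hb1]; exact ha₁.smul _)
    (fun j t => by simpa using hbr (j + 2) (by omega) t X) (2 * j + 1) t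
  rw [show ((2 * j + 1 : ℕ) : ZMod 2) = 1 by grind] at hparity
  exact ⟨hparity.apply_self_eq_zero, hparity.trace_eq_zero⟩
end
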